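/- Let T be an n×n real M-matrix (or an irreducible matrix satisfying condition T2 together with vᵀb ≤ 0), and consider the iteration P⁰ = O, (I − Pᵏ + T·Pᵏ)·x^{k+1} = b, Pᵏ = P(xᵏ). Then there exists k ≤ n such that (P^{k+1} − Pᵏ)·x^{k+1} = 0, i.e. the iteration converges to an exact solution of [I − P(x) + T·P(x)]·x = b in at most n steps. -/

import Mathlib

open Matrix

/-- Spectral radius of a real matrix: supremum of absolute values of its complex eigenvalues. -/
noncomputable def specRad {n : ℕ} (B : Matrix (Fin n) (Fin n) ℝ) : ℝ :=
  sSup {r : ℝ | ∃ μ ∈ spectrum ℂ (B.map (fun a => (a : ℂ))), r = ‖μ‖}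

/-- `T` is an M-matrix: `T = α•I - B` with `B ≥ O` entrywise and `ρ(B) < α`. -/
def IsMmat {n : ℕ} (T : Matrix (Fin n) (Fin n) ℝ) : Prop :=
  ∃ (α : ℝ) (B : Matrix (Fin n) (Fin n) ℝ),
    (∀ i j, 0 ≤ B i j) ∧ specRad B < α ∧ T = α • (1 : Matrix (Fin n) (Fin n) ℝ) - B

/-- `P(x)`: diagonal matrix with i-th entry `1` if `x i ≥ 0`, else `0`. -/
noncomputable def Pmat {n : ℕ} (x : Fin n → ℝ) : Matrix (Fin n) (Fin n) ℝ :=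
  Matrix.diagonal fun i => if 0 ≤ x i then 1 else 0

/-- Irreducibility of a matrix (strong connectivity of its directed graph). -/
def IsIrred {n : ℕ} (T : Matrix (Fin n) (Fin n) ℝ) : Prop :=
  ∀ S : Finset (Fin n), S.Nonempty → S ≠ Finset.univ → ∃ i ∈ S, ∃ j ∉ S, T i j ≠ 0

/-- Condition T2: `T` is irreducible, `null(Tᵀ) = span(v)`, `null(T) = span(w)` with
`v, w > 0` componentwise, and `T + D` is an M-matrix for every diagonal `D ≥ O`, `D ≠ O`. -/
def CondT2 {n : ℕ} (T : Matrix (Fin n) (Fin n) ℝ) (v w : Fin n → ℝ) : Prop :=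
  IsIrred T ∧ (∀ i, 0 < v i) ∧ (∀ i, 0 < w i) ∧
  LinearMap.ker (Matrix.mulVecLin Tᵀ) = Submodule.span ℝ {v} ∧
  LinearMap.ker (Matrix.mulVecLin T) = Submodule.span ℝ {w} ∧
  (∀ d : Fin n → ℝ, (∀ i, 0 ≤ d i) → d ≠ 0 → IsMmat (T + Matrix.diagonal d))

/-!
On the coordinates where the current iterate `x` is nonnegative, `P = P(x)` projects
`I - P + T P` onto the principal block `α I - P B P` of an M-matrix `α I - B`; since
`0 ≤ P B P ≤ B`, Gelfand's formula and a Neumann series show that this block has a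
nonnegative inverse. Hence `I - P + T P` is nonsingular, and every coordinate of the next
iterate whose counterpart in `x` is nonnegative stays nonnegative. The sets of nonnegative
coordinates therefore increase, starting from `∅` (because `P⁰ = O`), and must stop growing
within `n` steps, after which `P` no longer changes.

Under condition T2 this applies as long as the iterate has a negative coordinate, since then
`T + (I - P)` is an M-matrix. If instead some iterate `x ≥ 0` solves `(I - Q + T Q) x = b`,
pairing with the left null vector `v > 0` of `T` gives `0 ≤ vᵀ (I - Q) x = vᵀ b ≤ 0`,
so `(I - Q) x = 0` and `T x = b`.
-/

open Filter

theorem Matrix.mulVec_nonneg {m n R : Type*} [Fintype n] [Semiring R] [PartialOrder R]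
    [IsOrderedRing R] {A : Matrix m n R} (hA : ∀ i j, 0 ≤ A i j) {u : n → R} (hu : 0 ≤ u) :
    0 ≤ A *ᵥ u :=
  fun i => Finset.sum_nonneg fun j _ => mul_nonneg (hA i j) (hu j)

theorem Finset.exists_eq_succ_of_subset_succ {α : Type*} [Fintype α] (s : ℕ → Finset α)
    (hs : ∀ k ≤ Fintype.card α, s k ⊆ s (k + 1)) :
    ∃ k ≤ Fintype.card α, s k = s (k + 1) := by
  by_contra! hne
  have hcard : ∀ k ≤ Fintype.card α + 1, k ≤ (s k).card := by
    intro k hk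
    induction k with
    | zero => exact Nat.zero_le _
    | succ k ih =>
      have hlt := card_lt_card ((hs k (by omega)).ssubset_of_ne (hne k (by omega)))
      have := ih (by omega)
      omega
  have := hcard _ le_rfl
  have := card_le_univ (s (Fintype.card α + 1))
  omega

namespace Matrix

section NonnegInverse

variable {ι : Type*} [Fintype ι] [DecidableEq ι]

attribute [local instance] Matrix.linftyOpSeminormedAddCommGroup
  Matrix.linftyOpNormedAddCommGroup Matrix.linftyOpNormedRing Matrix.linftyOpNormedAlgebra

theorem pow_apply_le_pow_apply {C B : Matrix ι ι ℝ} (hC : ∀ i j, 0 ≤ C i j)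
    (hCB : ∀ i j, C i j ≤ B i j) (m : ℕ) (i j : ι) : (C ^ m) i j ≤ (B ^ m) i j := by
  induction m generalizing j with
  | zero => rfl
  | succ m ih =>
    rw [pow_succ, pow_succ, mul_apply, mul_apply]
    exact Finset.sum_le_sum fun k _ => mul_le_mul (ih k) (hCB k j) (hC k j)
      ((pow_apply_nonneg hC m i k).trans (ih k))

theorem linfty_opNorm_le_of_nnnorm_apply_le {m n α : Type*} [Fintype m] [Fintype n]
    [SeminormedAddCommGroup α] {C B : Matrix m n α} (h : ∀ i j, ‖C i j‖₊ ≤ ‖B i j‖₊) :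
    ‖C‖ ≤ ‖B‖ := by
  rw [linfty_opNorm_def, linfty_opNorm_def]
  exact_mod_cast Finset.sup_mono_fun fun i _ => Finset.sum_le_sum fun j _ => h i j

theorem linfty_opNorm_pow_le_of_le {C B : Matrix ι ι ℝ} (hC : ∀ i j, 0 ≤ C i j)
    (hCB : ∀ i j, C i j ≤ B i j) (m : ℕ) : ‖C ^ m‖ ≤ ‖B ^ m‖ := by
  refine linfty_opNorm_le_of_nnnorm_apply_le fun i j => ?_
  have hle := pow_apply_le_pow_apply hC hCB m i j
  have hC0 := pow_apply_nonneg hC m i j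
  rw [← NNReal.coe_le_coe, coe_nnnorm, coe_nnnorm, Real.norm_of_nonneg hC0,
    Real.norm_of_nonneg (hC0.trans hle)]
  exact hle

theorem linfty_opNorm_map_ofReal_pow (B : Matrix ι ι ℝ) (m : ℕ) :
    ‖B.map ((↑) : ℝ → ℂ) ^ m‖ = ‖B ^ m‖ := by
  change ‖B.map Complex.ofRealHom ^ m‖ = _
  rw [← Matrix.map_pow]
  simp [linfty_opNorm_def]

theorem exists_lt_eventually_linfty_opNorm_pow_le [Nonempty ι] {B : Matrix ι ι ℝ} {α : ℝ}
    (hB : ∀ μ ∈ spectrum ℂ (B.map ((↑) : ℝ → ℂ)), ‖μ‖ < α) :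
    ∃ β, 0 ≤ β ∧ β < α ∧ ∀ᶠ m in atTop, ‖B ^ m‖ ≤ β ^ m := by
  obtain ⟨μ, hμ, hρ⟩ := spectrum.exists_nnnorm_eq_spectralRadius (B.map ((↑) : ℝ → ℂ))
  obtain ⟨β, hμβ, hβα⟩ := exists_between (hB μ hμ)
  have hβ : 0 < β := (norm_nonneg μ).trans_lt hμβ
  have hρβ : spectralRadius ℂ (B.map ((↑) : ℝ → ℂ)) < ENNReal.ofReal β := by
    rw [← hρ, ← enorm_eq_nnnorm, ← ofReal_norm]
    exact (ENNReal.ofReal_lt_ofReal_iff hβ).2 hμβ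
  refine ⟨β, hβ.le, hβα, ?_⟩
  filter_upwards [(spectrum.pow_norm_pow_one_div_tendsto_nhds_spectralRadius _).eventually_lt_const
    hρβ, eventually_ne_atTop 0] with m hm hm0
  rw [ENNReal.ofReal_lt_ofReal_iff hβ, linfty_opNorm_map_ofReal_pow] at hm
  calc ‖B ^ m‖ = (‖B ^ m‖ ^ (1 / m : ℝ)) ^ m := by
        rw [one_div, Real.rpow_inv_natCast_pow (norm_nonneg _) hm0]
    _ ≤ β ^ m := pow_le_pow_left₀ (by positivity) hm.le m

theorem exists_nonneg_right_inv_smul_one_sub {C : Matrix ι ι ℝ} {α β : ℝ}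
    (hC : ∀ i j, 0 ≤ C i j) (hβ : 0 ≤ β) (hβα : β < α)
    (h : ∀ᶠ m in atTop, ‖C ^ m‖ ≤ β ^ m) :
    ∃ G, (α • 1 - C) * G = 1 ∧ ∀ i j, 0 ≤ G i j := by
  have hα : 0 < α := hβ.trans_lt hβα
  have hsum : Summable ((α⁻¹ • C) ^ ·) := by
    refine .of_norm_bounded_eventually_nat (summable_geometric_of_lt_one
      (div_nonneg hβ hα.le) ((div_lt_one hα).2 hβα)) (h.mono fun m hm => ?_)
    rw [smul_pow, norm_smul, div_pow, norm_pow, Real.norm_of_nonneg (inv_nonneg.2 hα.le),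
      inv_pow, div_eq_inv_mul]
    exact mul_le_mul_of_nonneg_left hm (by positivity)
  refine ⟨α⁻¹ • ∑' m, (α⁻¹ • C) ^ m, ?_, fun i j => ?_⟩
  · rw [mul_smul_comm, ← smul_mul_assoc, smul_sub, smul_smul, inv_mul_cancel₀ hα.ne', one_smul]
    exact hsum.one_sub_mul_tsum_pow
  · rw [smul_apply, smul_eq_mul]
    refine mul_nonneg (inv_nonneg.2 hα.le) ?_
    refine HasSum.nonneg (fun m => ?_) (Pi.hasSum.1 (Pi.hasSum.1 hsum.hasSum i) j)
    rw [smul_pow]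
    exact mul_nonneg (by positivity) (pow_apply_nonneg hC m i j)

theorem exists_nonneg_right_inv_smul_one_sub_of_le {C B : Matrix ι ι ℝ} {α : ℝ}
    (hC : ∀ i j, 0 ≤ C i j) (hCB : ∀ i j, C i j ≤ B i j)
    (hB : ∀ μ ∈ spectrum ℂ (B.map ((↑) : ℝ → ℂ)), ‖μ‖ < α) :
    ∃ G, (α • 1 - C) * G = 1 ∧ ∀ i j, 0 ≤ G i j := by
  cases isEmpty_or_nonempty ι
  · exact ⟨0, Subsingleton.elim _ _, fun i => isEmptyElim i⟩
  obtain ⟨β, hβ, hβα, hpow⟩ := exists_lt_eventually_linfty_opNorm_pow_le hB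
  exact exists_nonneg_right_inv_smul_one_sub hC hβ hβα
    (hpow.mono fun m hm => (linfty_opNorm_pow_le_of_le hC hCB m).trans hm)

theorem norm_lt_of_specRad_lt {n : ℕ} {B : Matrix (Fin n) (Fin n) ℝ} {α : ℝ}
    (h : specRad B < α) : ∀ μ ∈ spectrum ℂ (B.map ((↑) : ℝ → ℂ)), ‖μ‖ < α := by
  intro μ hμ
  obtain ⟨R, hR⟩ := isBounded_iff_forall_norm_le.1
    (spectrum.isBounded (𝕜 := ℂ) (B.map ((↑) : ℝ → ℂ)))
  have hbdd : BddAbove {r : ℝ | ∃ μ ∈ spectrum ℂ (B.map ((↑) : ℝ → ℂ)), r = ‖μ‖} :=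
    ⟨R, by rintro _ ⟨ν, hν, rfl⟩; exact hR ν hν⟩
  exact (le_csSup hbdd ⟨μ, hμ, rfl⟩).trans_lt h

end NonnegInverse

end Matrix

open Matrix

section IterationStep

variable {n : ℕ} {T : Matrix (Fin n) (Fin n) ℝ} {x : Fin n → ℝ}

def HasMmatRows (T : Matrix (Fin n) (Fin n) ℝ) (x : Fin n → ℝ) : Prop :=
  ∃ T', IsMmat T' ∧ ∀ i j, 0 ≤ x i → T i j = T' i j

theorem Pmat_mulVec_apply (x y : Fin n → ℝ) (i : Fin n) :
    (Pmat x *ᵥ y) i = if 0 ≤ x i then y i else 0 := by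
  simp [Pmat, mulVec_diagonal]

theorem Pmat_eq_one (hx : 0 ≤ x) : Pmat x = 1 := by
  rw [Pmat, ← diagonal_one]
  exact congrArg diagonal (funext fun i => if_pos (hx i))

theorem Pmat_mul_one_sub_add_mul_Pmat {B : Matrix (Fin n) (Fin n) ℝ} {α : ℝ}
    (hT : ∀ i j, 0 ≤ x i → T i j = (α • 1 - B) i j) :
    Pmat x * (1 - Pmat x + T * Pmat x) = (α • 1 - Pmat x * B * Pmat x) * Pmat x := by
  ext i j
  by_cases hi : 0 ≤ x i <;> by_cases hj : 0 ≤ x j <;> rcases eq_or_ne i j with rfl | hij <;>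
    simp [Pmat, one_apply, Matrix.mul_assoc, *]

theorem Pmat_mul_one_sub_add_mul_diagonal {B : Matrix (Fin n) (Fin n) ℝ} {α : ℝ}
    (hT : ∀ i j, 0 ≤ x i → T i j = (α • 1 - B) i j) (q : Fin n → ℝ) :
    Pmat x * (1 - diagonal q + T * diagonal q) =
      (α • 1 - Pmat x * B * Pmat x) * diagonal q * Pmat x +
        ((1 - diagonal q) * Pmat x + Pmat x * B * diagonal q * (Pmat x - 1)) := by
  ext i j
  by_cases hi : 0 ≤ x i <;> by_cases hj : 0 ≤ x j <;> rcases eq_or_ne i j with rfl | hij <;>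
    simp [Pmat, one_apply, Matrix.mul_assoc, sub_mul, mul_sub, *] <;> ring

theorem HasMmatRows.exists_nonneg_inv (h : HasMmatRows T x) :
    ∃ (α : ℝ) (B G : Matrix (Fin n) (Fin n) ℝ), (∀ i j, 0 ≤ B i j) ∧
      (∀ i j, 0 ≤ x i → T i j = (α • 1 - B) i j) ∧
      G * (α • 1 - Pmat x * B * Pmat x) = 1 ∧ ∀ i j, 0 ≤ G i j := by
  obtain ⟨_, ⟨α, B, hB, hρ, rfl⟩, hT⟩ := h
  have hPBP : ∀ i j, (Pmat x * B * Pmat x) i j = if 0 ≤ x i ∧ 0 ≤ x j then B i j else 0 := by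
    intro i j
    by_cases hi : 0 ≤ x i <;> by_cases hj : 0 ≤ x j <;> simp [Pmat, hi, hj]
  obtain ⟨G, hG, hG0⟩ := exists_nonneg_right_inv_smul_one_sub_of_le (C := Pmat x * B * Pmat x)
    (fun i j => by rw [hPBP]; split_ifs <;> simp [hB i j])
    (fun i j => by rw [hPBP]; split_ifs <;> simp [hB i j]) (norm_lt_of_specRad_lt hρ)
  exact ⟨α, B, G, hB, hT, mul_eq_one_comm.1 hG, hG0⟩

theorem Pmat_mulVec_eq {B G : Matrix (Fin n) (Fin n) ℝ} {α : ℝ}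
    (hT : ∀ i j, 0 ≤ x i → T i j = (α • 1 - B) i j)
    (hG : G * (α • 1 - Pmat x * B * Pmat x) = 1) (y : Fin n → ℝ) :
    Pmat x *ᵥ y = G *ᵥ (Pmat x *ᵥ ((1 - Pmat x + T * Pmat x) *ᵥ y)) := by
  rw [mulVec_mulVec, mulVec_mulVec, Matrix.mul_assoc, Pmat_mul_one_sub_add_mul_Pmat hT,
    ← Matrix.mul_assoc, hG, one_mul]

theorem HasMmatRows.isUnit_det (h : HasMmatRows T x) :
    IsUnit (1 - Pmat x + T * Pmat x).det := by
  obtain ⟨α, B, G, -, hT, hG, -⟩ := h.exists_nonneg_inv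
  rw [isUnit_iff_ne_zero, Ne, ← exists_mulVec_eq_zero_iff]
  rintro ⟨y, hy0, hy⟩
  have hPy : Pmat x *ᵥ y = 0 := by rw [Pmat_mulVec_eq hT hG, hy, mulVec_zero, mulVec_zero]
  apply hy0
  simpa [add_mulVec, sub_mulVec, ← mulVec_mulVec, hPy] using hy

/-- In the iteration, `y` is the iterate after `x` and `diagonal q` the projection that
produced `x`. -/
theorem HasMmatRows.nonneg_of_mulVec_eq (h : HasMmatRows T x) {q y : Fin n → ℝ} (hq0 : 0 ≤ q)
    (hq1 : q ≤ 1) (hy : (1 - Pmat x + T * Pmat x) *ᵥ y = (1 - diagonal q + T * diagonal q) *ᵥ x)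
    {i : Fin n} (hi : 0 ≤ x i) : 0 ≤ y i := by
  obtain ⟨α, B, G, hB, hT, hG, hG0⟩ := h.exists_nonneg_inv
  set N := (1 - diagonal q) * Pmat x + Pmat x * B * diagonal q * (Pmat x - 1)
  have hPy : Pmat x *ᵥ y = diagonal q *ᵥ (Pmat x *ᵥ x) + G *ᵥ (N *ᵥ x) := by
    rw [Pmat_mulVec_eq hT hG, hy, mulVec_mulVec x (Pmat x), Pmat_mul_one_sub_add_mul_diagonal hT,
      mulVec_mulVec, mul_add, ← Matrix.mul_assoc, ← Matrix.mul_assoc, hG, one_mul, add_mulVec,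
      ← mulVec_mulVec, ← mulVec_mulVec]
  have hPx : 0 ≤ Pmat x *ᵥ x := fun j => by
    rw [Pmat_mulVec_apply]
    split_ifs with hj
    exacts [hj, le_rfl]
  have hNx : 0 ≤ N *ᵥ x := by
    have hxneg : 0 ≤ (Pmat x - 1) *ᵥ x := fun j => by
      rw [sub_mulVec, one_mulVec, Pi.sub_apply, Pmat_mulVec_apply]
      split_ifs with hj
      exacts [(sub_self _).ge, by simpa using (not_le.1 hj).le]
    rw [add_mulVec, ← mulVec_mulVec, ← mulVec_mulVec]
    refine add_nonneg (mulVec_nonneg (fun j k => ?_) hPx)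
      (mulVec_nonneg (fun j k => ?_) hxneg)
    · rw [← diagonal_one, diagonal_sub, diagonal_apply]
      split_ifs
      exacts [sub_nonneg.2 (hq1 j), le_rfl]
    · simp only [Pmat, mul_diagonal, diagonal_mul]
      exact mul_nonneg (mul_nonneg (by split_ifs <;> simp) (hB j k)) (hq0 k)
  have hyi : y i = (Pmat x *ᵥ y) i := by rw [Pmat_mulVec_apply, if_pos hi]
  rw [hyi, hPy]
  have hQ : ∀ j k, 0 ≤ diagonal q j k := fun j k => by
    rw [diagonal_apply]
    split_ifs
    exacts [hq0 j, le_rfl]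
  exact add_nonneg (mulVec_nonneg hQ hPx i) (mulVec_nonneg hG0 hNx i)

theorem hasMmatRows_of_isMmat_add_diagonal
    (hT : ∀ d : Fin n → ℝ, (∀ i, 0 ≤ d i) → d ≠ 0 → IsMmat (T + diagonal d))
    (hx : ∃ i, x i < 0) : HasMmatRows T x := by
  obtain ⟨i₀, hi₀⟩ := hx
  refine ⟨_, hT (fun i => if 0 ≤ x i then 0 else 1) (fun i => by split_ifs <;> simp)
    (fun h0 => by simpa [hi₀.not_ge] using congrFun h0 i₀), fun i j hi => ?_⟩
  simp [diagonal_apply, hi]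

theorem one_sub_diagonal_mulVec_eq_zero {v q b : Fin n → ℝ} (hv : ∀ i, 0 < v i)
    (hvT : v ᵥ* T = 0) (hvb : v ⬝ᵥ b ≤ 0) (hx : 0 ≤ x) (hq1 : q ≤ 1)
    (hb : (1 - diagonal q + T * diagonal q) *ᵥ x = b) : (1 - diagonal q) *ᵥ x = 0 := by
  have hu : 0 ≤ (1 - diagonal q) *ᵥ x := fun i => by
    rw [← diagonal_one, diagonal_sub, mulVec_diagonal]
    exact mul_nonneg (sub_nonneg.2 (hq1 i)) (hx i)
  have hvu : v ⬝ᵥ ((1 - diagonal q) *ᵥ x) = v ⬝ᵥ b := by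
    rw [← hb, add_mulVec, dotProduct_add, ← mulVec_mulVec, dotProduct_mulVec v T, hvT,
      zero_dotProduct, add_zero]
  have hsum := (Finset.sum_eq_zero_iff_of_nonneg fun i _ => mul_nonneg (hv i).le (hu i)).1
    (le_antisymm (hvu.trans_le hvb) (Finset.sum_nonneg fun i _ => mul_nonneg (hv i).le (hu i)))
  funext i
  exact (mul_eq_zero.1 (hsum i (Finset.mem_univ i))).resolve_left (hv i).ne'

end IterationStep

section Iteration

variable {n : ℕ} {T : Matrix (Fin n) (Fin n) ℝ} {b : Fin n → ℝ} {x : ℕ → Fin n → ℝ}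
  {P : ℕ → Matrix (Fin n) (Fin n) ℝ}

structure IsIteration (T : Matrix (Fin n) (Fin n) ℝ) (b : Fin n → ℝ) (x : ℕ → Fin n → ℝ)
    (P : ℕ → Matrix (Fin n) (Fin n) ℝ) : Prop where
  P_zero : P 0 = 0
  P_eq : ∀ k, 1 ≤ k → P k = Pmat (x k)
  x_succ : ∀ k, x (k + 1) = (1 - P k + T * P k)⁻¹ *ᵥ b

/-- The coordinates selected by `P k`; the condition `1 ≤ k` accounts for `P 0 = 0`. -/
noncomputable def activeSet (x : ℕ → Fin n → ℝ) (k : ℕ) : Finset (Fin n) :=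
  {i | 1 ≤ k ∧ 0 ≤ x k i}

namespace IsIteration

theorem P_eq_diagonal (h : IsIteration T b x P) (k : ℕ) :
    P k = diagonal fun i => if i ∈ activeSet x k then 1 else 0 := by
  rcases Nat.eq_zero_or_pos k with rfl | hk
  · simp [h.P_zero, activeSet]
  · simp [h.P_eq k hk, Pmat, activeSet, Nat.one_le_iff_ne_zero.2 hk.ne']

theorem mulVec_succ (h : IsIteration T b x P) {k : ℕ} (hk : 1 ≤ k → HasMmatRows T (x k)) :
    (1 - P k + T * P k) *ᵥ x (k + 1) = b := by
  have hdet : IsUnit (1 - P k + T * P k).det := by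
    rcases Nat.eq_zero_or_pos k with rfl | hk1
    · simp [h.P_zero]
    · rw [h.P_eq k hk1]
      exact (hk hk1).isUnit_det
  rw [h.x_succ, mulVec_mulVec, mul_nonsing_inv _ hdet, one_mulVec]

theorem activeSet_subset (h : IsIteration T b x P) {k : ℕ} (hk : HasMmatRows T (x (k + 1)))
    (hsol : (1 - P k + T * P k) *ᵥ x (k + 1) = b) :
    activeSet x (k + 1) ⊆ activeSet x (k + 2) := by
  intro i hi
  simp only [activeSet, Finset.mem_filter, Finset.mem_univ, true_and] at hi ⊢
  refine ⟨by omega, hk.nonneg_of_mulVec_eq (q := fun i => if i ∈ activeSet x k then 1 else 0)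
    (fun i => by dsimp only; split_ifs <;> simp) (fun i => by dsimp only; split_ifs <;> simp)
    ?_ hi.2⟩
  rw [← h.P_eq_diagonal, ← h.P_eq (k + 1) (by omega), h.mulVec_succ fun _ => hk, hsol]

theorem exists_converged (h : IsIteration T b x P)
    (hrows : ∀ k, 1 ≤ k → k ≤ n → HasMmatRows T (x k)) :
    ∃ k ≤ n, (P (k + 1) - P k) *ᵥ x (k + 1) = 0 ∧
      (1 - Pmat (x (k + 1)) + T * Pmat (x (k + 1))) *ᵥ x (k + 1) = b := by
  have hmono : ∀ k ≤ Fintype.card (Fin n), activeSet x k ⊆ activeSet x (k + 1) := by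
    rw [Fintype.card_fin]
    rintro (_ | j) hj
    · simp [activeSet]
    · exact h.activeSet_subset (hrows (j + 1) (by omega) hj)
        (h.mulVec_succ fun hj' => hrows j hj' (by omega))
  obtain ⟨k, hk, hs⟩ := Finset.exists_eq_succ_of_subset_succ (activeSet x) hmono
  rw [Fintype.card_fin] at hk
  have hP : P (k + 1) = P k := by rw [h.P_eq_diagonal, h.P_eq_diagonal, hs]
  refine ⟨k, hk, by rw [hP, sub_self, zero_mulVec], ?_⟩
  rw [← h.P_eq (k + 1) (by omega), hP]
  exact h.mulVec_succ fun hk1 => hrows k hk1 hk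

theorem exists_converged_of_left_null {v : Fin n → ℝ} (h : IsIteration T b x P)
    (hT : ∀ d : Fin n → ℝ, (∀ i, 0 ≤ d i) → d ≠ 0 → IsMmat (T + diagonal d))
    (hv : ∀ i, 0 < v i) (hvT : v ᵥ* T = 0) (hvb : v ⬝ᵥ b ≤ 0) :
    ∃ k ≤ n, (P (k + 1) - P k) *ᵥ x (k + 1) = 0 ∧
      (1 - Pmat (x (k + 1)) + T * Pmat (x (k + 1))) *ᵥ x (k + 1) = b := by
  by_cases hneg : ∀ k, 1 ≤ k → k ≤ n → ∃ i, x k i < 0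
  · exact h.exists_converged fun k hk1 hkn =>
      hasMmatRows_of_isMmat_add_diagonal hT (hneg k hk1 hkn)
  have hex : ∃ k, k + 1 ≤ n ∧ 0 ≤ x (k + 1) := by
    push Not at hneg
    obtain ⟨k, hk1, hkn, hx⟩ := hneg
    exact ⟨k - 1, by omega, by rw [Nat.sub_add_cancel hk1]; exact hx⟩
  classical
  obtain ⟨hkn, hx⟩ := Nat.find_spec hex
  set k := Nat.find hex
  have hsol := h.mulVec_succ (k := k) fun hk1 => hasMmatRows_of_isMmat_add_diagonal hT <| by
    have hmin := Nat.find_min hex (show k - 1 < k by omega)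
    rw [Nat.sub_add_cancel hk1] at hmin
    simp only [Pi.le_def, not_and, not_forall, not_le] at hmin
    exact hmin (by omega)
  rw [h.P_eq_diagonal k] at hsol
  have hfix := one_sub_diagonal_mulVec_eq_zero hv hvT hvb hx
    (fun i => by dsimp only; split_ifs <;> simp) hsol
  refine ⟨k, by omega, ?_, ?_⟩
  · rwa [h.P_eq (k + 1) (by omega), Pmat_eq_one hx, h.P_eq_diagonal k]
  · have hQx := hfix
    rw [sub_mulVec, one_mulVec, sub_eq_zero] at hQx
    rw [Pmat_eq_one hx, sub_self, zero_add, mul_one, ← hsol, add_mulVec, hfix, zero_add,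
      ← mulVec_mulVec, ← hQx]

end IsIteration

end Iteration

/-- If `T` is an M-matrix, or irreducible satisfying condition T2 with
`vᵀb ≤ 0`, then the iteration `P⁰ = O`, `x^{k+1} = (I − Pᵏ + T·Pᵏ)⁻¹·b`, `Pᵏ = P(xᵏ)`
converges in at most `n` steps: there is `k ≤ n` with `(P^{k+1} − Pᵏ)·x^{k+1} = 0`, and
then `x^{k+1}` is an exact solution of `[I − P(x) + T·P(x)]·x = b`. -/
theorem stmt10 {n : ℕ} (T : Matrix (Fin n) (Fin n) ℝ) (v w b : Fin n → ℝ)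
    (hT : IsMmat T ∨ (CondT2 T v w ∧ v ⬝ᵥ b ≤ 0))
    (x : ℕ → Fin n → ℝ) (P : ℕ → Matrix (Fin n) (Fin n) ℝ)
    (hP0 : P 0 = 0) (hPk : ∀ k, 1 ≤ k → P k = Pmat (x k))
    (hit : ∀ k, x (k + 1) = (1 - P k + T * P k)⁻¹ *ᵥ b) :
    ∃ k ≤ n, (P (k + 1) - P k) *ᵥ x (k + 1) = 0 ∧
      (1 - Pmat (x (k + 1)) + T * Pmat (x (k + 1))) *ᵥ x (k + 1) = b := by
  have h : IsIteration T b x P := ⟨hP0, hPk, hit⟩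
  rcases hT with hM | ⟨⟨-, hv, -, hker, -, hD⟩, hvb⟩
  · exact h.exists_converged fun k _ _ => ⟨T, hM, fun _ _ _ => rfl⟩
  · have hvT : v ᵥ* T = 0 := by
      have hv : v ∈ LinearMap.ker (mulVecLin Tᵀ) := hker ▸ Submodule.mem_span_singleton_self v
      rwa [LinearMap.mem_ker, mulVecLin_apply, mulVec_transpose] at hv
    exact h.exists_converged_of_left_null hD hv hvT hvb
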